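/- arXiv:1902.06951 — 2 statements merged into one kernel-verified Lean document; each statement's English description precedes it below -/
import Mathlib

section
/- Let a22, a32, a23, a33, b22, b32, b23, b33, λ, μ, γ be complex numbers with λ ≠ 0, μ ≠ 0, γ ≠ 0, and b32 ≠ 0. Suppose: (i) a22·b22 + a32·b32 = 1; (ii) a23·b23 + a33·b33 = 1; (iii) a22·b23 + a32·b33 = 0; (iv) a23·b22 + a33·b32 = 0; and (v) λμ·a22·b22 + μγ·a32·b32 = λμ; (vi) λμ·a23·b23 + μγ·a33·b33 = μγ; (vii) λμ·a22·b23 + μγ·a32·b33 = 0; (viii) λμ·a23·b22 + μγ·a33·b32 = 0. Then γ = λ. -/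
/-!
Write `A = !![a22, a32; a23, a33]`, `B = !![b22, b23; b32, b33]` and `D = diagonal ![λμ, μγ]`.
Equations (i)–(iv) say `A * B = 1` and (v)–(viii) say `A * D * B = D`, so `B` is the inverse of `A`
and commutes with `D`. A matrix commuting with a diagonal matrix can only have a nonzero entry at
`(i, j)` when the diagonal entries `i` and `j` agree; the entry `b32 ≠ 0` then forces `λμ = μγ`.
-/

namespace Matrix

variable {n R : Type*} [Fintype n] [DecidableEq n] [CommRing R]

theorem commute_diagonal_of_mul_eq_one_of_mul_diagonal_mul_eq {A B : Matrix n n R} {d : n → R}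
    (hAB : A * B = 1) (hD : A * diagonal d * B = diagonal d) : Commute B (diagonal d) := by
  have hBA : B * A = 1 := mul_eq_one_comm.mp hAB
  calc B * diagonal d = B * (A * diagonal d * B) := by rw [hD]
    _ = B * A * diagonal d * B := by simp only [Matrix.mul_assoc]
    _ = diagonal d * B := by rw [hBA, Matrix.one_mul]

theorem eq_of_commute_diagonal_of_ne_zero [NoZeroDivisors R] {M : Matrix n n R} {d : n → R}
    (hM : Commute M (diagonal d)) {i j : n} (hij : M i j ≠ 0) : d i = d j := by
  have hentry : d i * M i j = M i j * d j := by
    simpa only [diagonal_mul, mul_diagonal] using congrFun (congrFun hM.eq i) j |>.symm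
  exact mul_right_cancel₀ hij (by rw [hentry, mul_comm])

end Matrix

open Matrix in
theorem stmt16_general (a22 a32 a23 a33 b22 b32 b23 b33 lam mu gam : ℂ)
    (hmu : mu ≠ 0) (hb32 : b32 ≠ 0)
    (h1 : a22 * b22 + a32 * b32 = 1)
    (h2 : a23 * b23 + a33 * b33 = 1)
    (h3 : a22 * b23 + a32 * b33 = 0)
    (h4 : a23 * b22 + a33 * b32 = 0)
    (h5 : lam * mu * (a22 * b22) + mu * gam * (a32 * b32) = lam * mu)
    (h6 : lam * mu * (a23 * b23) + mu * gam * (a33 * b33) = mu * gam)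
    (h7 : lam * mu * (a22 * b23) + mu * gam * (a32 * b33) = 0)
    (h8 : lam * mu * (a23 * b22) + mu * gam * (a33 * b32) = 0) :
    gam = lam := by
  set A : Matrix (Fin 2) (Fin 2) ℂ := !![a22, a32; a23, a33]
  set B : Matrix (Fin 2) (Fin 2) ℂ := !![b22, b23; b32, b33]
  have hAB : A * B = 1 := by
    rw [mul_fin_two, one_fin_two, h1, h2, h3, h4]
  have hD : A * diagonal ![lam * mu, mu * gam] * B = diagonal ![lam * mu, mu * gam] := by
    rw [diagonal_vec2, mul_fin_two, mul_fin_two]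
    ext i j
    fin_cases i <;> fin_cases j <;>
      simp only [Fin.zero_eta, Fin.mk_one, Fin.isValue, of_apply, cons_val', cons_val_zero,
        cons_val_one, cons_val_fin_one]
    · linear_combination h5
    · linear_combination h7
    · linear_combination h8
    · linear_combination h6
  have hcomm := commute_diagonal_of_mul_eq_one_of_mul_diagonal_mul_eq hAB hD
  have hdiag : mu * gam = lam * mu :=
    eq_of_commute_diagonal_of_ne_zero hcomm (i := 1) (j := 0) hb32
  exact mul_left_cancel₀ hmu (by linear_combination hdiag)

theorem stmt16 (a22 a32 a23 a33 b22 b32 b23 b33 lam mu gam : ℂ)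
    (hlam : lam ≠ 0) (hmu : mu ≠ 0) (hgam : gam ≠ 0) (hb32 : b32 ≠ 0)
    (h1 : a22 * b22 + a32 * b32 = 1)
    (h2 : a23 * b23 + a33 * b33 = 1)
    (h3 : a22 * b23 + a32 * b33 = 0)
    (h4 : a23 * b22 + a33 * b32 = 0)
    (h5 : lam * mu * (a22 * b22) + mu * gam * (a32 * b32) = lam * mu)
    (h6 : lam * mu * (a23 * b23) + mu * gam * (a33 * b33) = mu * gam)
    (h7 : lam * mu * (a22 * b23) + mu * gam * (a32 * b33) = 0)
    (h8 : lam * mu * (a23 * b22) + mu * gam * (a33 * b32) = 0) :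
    gam = lam :=
  stmt16_general a22 a32 a23 a33 b22 b32 b23 b33 lam mu gam hmu hb32 h1 h2 h3 h4 h5 h6 h7 h8
end

section
/- Let B12, B13, B32, B33, b12, b13, b32, b33, λ, γ be complex numbers with λ ≠ 0 and b33 ≠ 0. Suppose: (i) B12·b12 + B32·b32 = 1; (ii) B13·b13 + B33·b33 = 1; (iii) B12·b13 + B32·b33 = 0; (iv) B13·b12 + B33·b32 = 0; and (v) B12·b12 + γλ·B32·b32 = λ²; (vi) B13·b13 + γλ·B33·b33 = λ²; (vii) B12·b13 + γλ·B32·b33 = 0; (viii) B13·b12 + γλ·B33·b32 = 0. Then γ·λ = 1. -/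
/-!
Equations (i)–(iv) say `M * N = 1` and (v)–(viii) say `M * diag(1, γλ) * N = λ² • 1` for
`M = !![B12, B32; B13, B33]` and `N = !![b12, b13; b32, b33]`. As `N = M⁻¹`, conjugating back
gives `diag(1, γλ) = λ² • 1`, so `λ² = 1` and `γλ = λ² = 1`.
-/

theorem Matrix.eq_smul_one_of_mul_mul_eq_smul_one {n R : Type*} [Fintype n] [DecidableEq n]
    [CommRing R] {M N D : Matrix n n R} {c : R} (hMN : M * N = 1) (hD : M * D * N = c • 1) :
    D = c • 1 :=
  have hNM : N * M = 1 := mul_eq_one_comm.mp hMN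
  calc D = N * (M * D * N) * M := by
        simp only [Matrix.mul_assoc, hNM, Matrix.mul_one, ← Matrix.mul_assoc N M, Matrix.one_mul]
    _ = c • 1 := by rw [hD, Matrix.mul_smul, Matrix.mul_one, Matrix.smul_mul, hNM]

theorem stmt17_general (B12 B13 B32 B33 b12 b13 b32 b33 lam gam : ℂ)
    (h1 : B12 * b12 + B32 * b32 = 1)
    (h2 : B13 * b13 + B33 * b33 = 1)
    (h3 : B12 * b13 + B32 * b33 = 0)
    (h4 : B13 * b12 + B33 * b32 = 0)
    (h5 : B12 * b12 + gam * lam * (B32 * b32) = lam ^ 2)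
    (h6 : B13 * b13 + gam * lam * (B33 * b33) = lam ^ 2)
    (h7 : B12 * b13 + gam * lam * (B32 * b33) = 0)
    (h8 : B13 * b12 + gam * lam * (B33 * b32) = 0) :
    gam * lam = 1 := by
  have hMN : !![B12, B32; B13, B33] * !![b12, b13; b32, b33] = 1 := by
    rw [Matrix.mul_fin_two, Matrix.one_fin_two, h1, h2, h3, h4]
  have hD : !![B12, B32; B13, B33] * !![1, 0; 0, gam * lam] * !![b12, b13; b32, b33] =
      lam ^ 2 • (1 : Matrix (Fin 2) (Fin 2) ℂ) := by
    ext i j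
    fin_cases i <;> fin_cases j <;> simp [Matrix.mul_apply, Fin.sum_univ_two]
    exacts [by linear_combination h5, by linear_combination h7, by linear_combination h8,
      by linear_combination h6]
  have hdiag := congrFun₂ (Matrix.eq_smul_one_of_mul_mul_eq_smul_one hMN hD)
  have hlam_sq : (1 : ℂ) = lam ^ 2 := by simpa using hdiag 0 0
  simpa [← hlam_sq] using hdiag 1 1

theorem stmt17 (B12 B13 B32 B33 b12 b13 b32 b33 lam gam : ℂ)
    (hlam : lam ≠ 0) (hb33 : b33 ≠ 0)
    (h1 : B12 * b12 + B32 * b32 = 1)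
    (h2 : B13 * b13 + B33 * b33 = 1)
    (h3 : B12 * b13 + B32 * b33 = 0)
    (h4 : B13 * b12 + B33 * b32 = 0)
    (h5 : B12 * b12 + gam * lam * (B32 * b32) = lam ^ 2)
    (h6 : B13 * b13 + gam * lam * (B33 * b33) = lam ^ 2)
    (h7 : B12 * b13 + gam * lam * (B32 * b33) = 0)
    (h8 : B13 * b12 + gam * lam * (B33 * b32) = 0) :
    gam * lam = 1 :=
  stmt17_general B12 B13 B32 B33 b12 b13 b32 b33 lam gam h1 h2 h3 h4 h5 h6 h7 h8
end
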